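/- arXiv:0802.2300 — 5 statements merged into one kernel-verified Lean document; each statement's English description precedes it below -/
import Mathlib

section
/- Let R be a finite commutative ring and let u, v ∈ R^n be vectors such that u_i·v_j − u_j·v_i is a unit of R for some indices i, j. Let X be a uniformly random vector in R^n, and let μ be the distribution of the pair (⟨u,X⟩, ⟨v,X⟩) ∈ R². Then μ is the uniform distribution on R²; in particular, for every (a,b) ∈ R², Pr[(⟨u,X⟩, ⟨v,X⟩) = (a,b)] = 1/|R|². -/
/-!
The map `X ↦ (⟨u,X⟩, ⟨v,X⟩)` is additive, so all its nonempty fibres are translates of the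
kernel and have the same size. It is surjective: if `d = u i v j - u j v i` is a unit, then
`X = d⁻¹ (v j a - u j b) eᵢ + d⁻¹ (u i b - v i a) eⱼ` (Cramer's rule) is sent to `(a, b)`.
Hence every fibre has `|R|ⁿ / |R|²` elements.
-/

open Finset Matrix

theorem AddMonoidHom.card_fiber_mul_card_eq {G H F : Type*} [AddGroup G] [Fintype G]
    [AddMonoid H] [Fintype H] [DecidableEq H] [FunLike F G H] [AddMonoidHomClass F G H]
    (f : F) (hf : Function.Surjective f) (y : H) :
    #{g | f g = y} * Fintype.card H = Fintype.card G := by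
  calc #{g | f g = y} * Fintype.card H
      = ∑ z : H, #{g | f g = z} := by
        rw [Fintype.card, mul_comm, ← smul_eq_mul, ← sum_const]
        exact sum_congr rfl fun z _ ↦
          card_fiber_eq_of_mem_range f (hf y) (hf z)
    _ = Fintype.card G := (card_eq_sum_card_fiberwise fun g _ ↦ mem_univ (f g)).symm

theorem dotProduct_prod_surjective {R ι : Type*} [CommRing R] [Fintype ι] [DecidableEq ι]
    {u v : ι → R} {i j : ι} (hd : IsUnit (u i * v j - u j * v i)) :
    Function.Surjective ((dotProductBilin R R u).prod (dotProductBilin R R v)) := by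
  rintro ⟨a, b⟩
  obtain ⟨d, hd⟩ := hd
  refine ⟨Pi.single i (↑d⁻¹ * (v j * a - u j * b)) + Pi.single j (↑d⁻¹ * (u i * b - v i * a)), ?_⟩
  have hdd : (↑d⁻¹ : R) * (u i * v j - u j * v i) = 1 := by rw [← hd, Units.inv_mul]
  simp only [LinearMap.prod_apply, Function.prod, dotProductBilin_apply_apply, dotProduct_add,
    dotProduct_single, Prod.mk.injEq]
  constructor
  · linear_combination a * hdd
  · linear_combination b * hdd

/-- If `u, v : Fin n → R` over a finite commutative ring satisfy
`IsUnit (u i * v j - u j * v i)` for some `i, j`, then for uniformly random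
`X : Fin n → R`, the pair `(⟨u,X⟩, ⟨v,X⟩)` is uniform on `R²`:
for every `(a,b)`, the number of `X` with that pair of dot products, times `|R|²`,
equals `|R|ⁿ = |R^n|` (i.e. the probability is `1/|R|²`). -/
theorem stmt_0 {n : ℕ} (R : Type*) [CommRing R] [Fintype R] [DecidableEq R]
    (u v : Fin n → R)
    (h : ∃ i j : Fin n, IsUnit (u i * v j - u j * v i)) (a b : R) :
    (Finset.univ.filter
        (fun X : Fin n → R => (∑ m, u m * X m) = a ∧ (∑ m, v m * X m) = b)).card
      * (Fintype.card R) ^ 2 = Fintype.card (Fin n → R) := by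
  obtain ⟨i, j, hd⟩ := h
  have hfiber : (Finset.univ.filter
      (fun X : Fin n → R => (∑ m, u m * X m) = a ∧ (∑ m, v m * X m) = b)) =
      ({X | (dotProductBilin R R u).prod (dotProductBilin R R v) X = (a, b)} : Finset _) := by
    ext X
    simp [dotProduct]
  rw [hfiber, sq, ← Fintype.card_prod]
  exact AddMonoidHom.card_fiber_mul_card_eq _ (dotProduct_prod_surjective hd) _
end

section
/- If an n × n Hadamard matrix exists with n ≥ 3, then n is divisible by 4. -/
/-!
Take three distinct rows `a`, `b`, `c` of a Hadamard matrix of order `n`. Expanding and using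
orthogonality, `(a + b) ⬝ᵥ (a + c) = a ⬝ᵥ a = n`. On the other hand, since all entries are `±1`,
each summand `(aₖ + bₖ)(aₖ + cₖ)` is `0` or `4`, so `n` is a multiple of `4`.
-/

open Finset Matrix

variable {R : Type*} [CommRing R]

lemma add_mul_add_eq_zero_or_four {x y z : R} (hx : x = 1 ∨ x = -1) (hy : y = 1 ∨ y = -1)
    (hz : z = 1 ∨ z = -1) : (x + y) * (x + z) = 0 ∨ (x + y) * (x + z) = 4 := by
  rcases hx with rfl | rfl <;> rcases hy with rfl | rfl <;> rcases hz with rfl | rfl <;>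
    norm_num

lemma sum_eq_four_mul_card_of_eq_zero_or_four [DecidableEq R] {ι : Type*} [Fintype ι]
    (f : ι → R) (hf : ∀ i, f i = 0 ∨ f i = 4) : ∑ i, f i = 4 * #{i | f i = 4} := by
  rw [natCast_card_filter, mul_sum]
  refine sum_congr rfl fun i _ => ?_
  rcases hf i with h | h <;> by_cases h4 : f i = 4 <;> simp_all

lemma add_dotProduct_add_eq_of_mul_transpose_eq {ι : Type*} [Fintype ι] [DecidableEq ι]
    {H : Matrix ι ι R} {d : R} (hH : H * Hᵀ = d • 1) {a b c : ι}
    (hab : a ≠ b) (hac : a ≠ c) (hbc : b ≠ c) : (H a + H b) ⬝ᵥ (H a + H c) = d := by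
  have hrow : ∀ i j, H i ⬝ᵥ H j = (d • (1 : Matrix ι ι R)) i j := fun i j => by
    rw [← hH]
    rfl
  simp only [add_dotProduct, dotProduct_add, hrow, Matrix.smul_apply, one_apply_eq,
    one_apply_ne hac, one_apply_ne hab.symm, one_apply_ne hbc, smul_eq_mul, mul_one, mul_zero,
    add_zero]

/-- If an `n × n` Hadamard matrix exists with `n ≥ 3`,
then `4 ∣ n`. -/
theorem stmt_7 (n : ℕ) (hn : 3 ≤ n) (H : Matrix (Fin n) (Fin n) ℝ)
    (hentries : ∀ i j, H i j = 1 ∨ H i j = -1)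
    (hHad : H * H.transpose = (n : ℝ) • (1 : Matrix (Fin n) (Fin n) ℝ)) :
    4 ∣ n := by
  let a : Fin n := ⟨0, by omega⟩
  let b : Fin n := ⟨1, by omega⟩
  let c : Fin n := ⟨2, by omega⟩
  have hn4 := add_dotProduct_add_eq_of_mul_transpose_eq hHad (a := a) (b := b) (c := c)
    (by simp [a, b, Fin.ext_iff]) (by simp [a, c, Fin.ext_iff]) (by simp [b, c, Fin.ext_iff])
  simp only [dotProduct, Pi.add_apply] at hn4
  rw [sum_eq_four_mul_card_of_eq_zero_or_four _
    fun k => add_mul_add_eq_zero_or_four (hentries a k) (hentries b k) (hentries c k)] at hn4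
  exact ⟨_, by exact_mod_cast hn4.symm⟩
end

section
/- Suppose there exists an n' × n' Hadamard matrix for n' = 2(p+1) where p is an odd prime (Paley-type construction). Assuming that for every sufficiently large N there is a prime between N and N + N^{0.525}, it follows that for all n, the smallest n' ≥ n for which an n' × n' Hadamard matrix exists satisfies h(n) ≤ n + O(n^{0.525}). -/
/-!
To bound `h(n)`, take a prime `p` in `[m, m + m^θ]` with `m = ⌈n/2⌉`. Then `p` is odd, so Paley
gives a Hadamard matrix of order `2(p + 1) ≥ n`, and `2(p + 1) ≤ n + 3 + 2 n^θ ≤ n + 5 n^θ`.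
-/

/-- An `n × n` Hadamard matrix exists: a ±1 matrix with `H * Hᵀ = n • 1`. -/
def ExistsHadamard (n : ℕ) : Prop :=
  ∃ H : Matrix (Fin n) (Fin n) ℝ,
    (∀ i j, H i j = 1 ∨ H i j = -1) ∧
    H * H.transpose = (n : ℝ) • (1 : Matrix (Fin n) (Fin n) ℝ)

/-- `hadamardH n` is the smallest `n' ≥ n` such that an `n' × n'` Hadamard
matrix exists. -/
noncomputable def hadamardH (n : ℕ) : ℕ :=
  sInf {n' : ℕ | n ≤ n' ∧ ExistsHadamard n'}

theorem hadamardH_le {n m : ℕ} (hnm : n ≤ m) (hm : ExistsHadamard m) : hadamardH n ≤ m :=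
  Nat.sInf_le ⟨hnm, hm⟩

theorem two_mul_succ_le_add_mul_rpow {n p : ℕ} {θ : ℝ} (hθ : 0 ≤ θ) (hn : 1 ≤ n)
    (hp : (p : ℝ) ≤ ((n + 1) / 2 : ℕ) + (((n + 1) / 2 : ℕ) : ℝ) ^ θ) :
    ((2 * (p + 1) : ℕ) : ℝ) ≤ n + 5 * (n : ℝ) ^ θ := by
  have hm : (((n + 1) / 2 : ℕ) : ℝ) ≤ ((n : ℝ) + 1) / 2 := by
    rw [le_div_iff₀ two_pos]
    exact_mod_cast Nat.div_mul_le_self (n + 1) 2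
  have hpow : (((n + 1) / 2 : ℕ) : ℝ) ^ θ ≤ (n : ℝ) ^ θ :=
    Real.rpow_le_rpow (Nat.cast_nonneg _) (by exact_mod_cast (by omega : (n + 1) / 2 ≤ n)) hθ
  have hone : 1 ≤ (n : ℝ) ^ θ := Real.one_le_rpow (by exact_mod_cast hn) hθ
  push_cast
  linarith

theorem hadamardH_le_add_mul_rpow_of_prime_gap {θ : ℝ} (hθ : 0 ≤ θ)
    (hPaley : ∀ p : ℕ, p.Prime → Odd p → ExistsHadamard (2 * (p + 1)))
    {n₀ : ℕ} (hgap : ∀ n : ℕ, n₀ ≤ n →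
      ∃ p : ℕ, p.Prime ∧ n ≤ p ∧ (p : ℝ) ≤ (n : ℝ) + (n : ℝ) ^ θ)
    {n : ℕ} (hn : max (2 * n₀) 5 ≤ n) :
    (hadamardH n : ℝ) ≤ n + 5 * (n : ℝ) ^ θ := by
  obtain ⟨p, hp, hmp, hple⟩ := hgap ((n + 1) / 2) (by omega)
  have hodd : Odd p := hp.odd_of_ne_two (by omega)
  calc (hadamardH n : ℝ) ≤ ((2 * (p + 1) : ℕ) : ℝ) := by
        exact_mod_cast hadamardH_le (by omega) (hPaley p hp hodd)
    _ ≤ n + 5 * (n : ℝ) ^ θ := two_mul_succ_le_add_mul_rpow hθ (by omega) hple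

/-- Assuming (i) for every odd prime `p` there is a
`2(p+1) × 2(p+1)` Hadamard matrix (Paley construction), and (ii) for all
sufficiently large `N` there is a prime in `[N, N + N^{0.525}]`, it follows
that `h(n) ≤ n + O(n^{0.525})`. -/
theorem stmt_12
    (hPaley : ∀ p : ℕ, p.Prime → Odd p → ExistsHadamard (2 * (p + 1)))
    (hPrimeGap : ∃ n₀ : ℕ, ∀ n : ℕ, n₀ ≤ n →
      ∃ p : ℕ, p.Prime ∧ n ≤ p ∧ (p : ℝ) ≤ (n : ℝ) + (n : ℝ) ^ (0.525 : ℝ)) :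
    ∃ C : ℝ, 0 < C ∧ ∃ n₁ : ℕ, ∀ n : ℕ, n₁ ≤ n →
      (hadamardH n : ℝ) ≤ (n : ℝ) + C * (n : ℝ) ^ (0.525 : ℝ) := by
  obtain ⟨n₀, hgap⟩ := hPrimeGap
  exact ⟨5, by norm_num, max (2 * n₀) 5, fun n hn =>
    hadamardH_le_add_mul_rpow_of_prime_gap (by norm_num) hPaley hgap hn⟩
end

section
/- Let μ be a balanced pairwise independent distribution on [q]^k. Then the support of μ has size at least k(q−1)+1. -/
/-!
Under μ, the constant function and the centred indicators `1[x i = a] - 1/q` with `a ≠ a₀`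
have a block-diagonal Gram matrix: `1` for the constant, and `(I - J/q)/q` for each coordinate
(covariances of distinct coordinates vanish by pairwise independence). Since `J` has eigenvalues
`0` and `q - 1 ≠ q`, this matrix is nonsingular, so the family stays linearly independent when
restricted to the support of μ, which therefore has at least `1 + k(q - 1)` points.
-/

open Finset Matrix

section WeightedGram

variable {α ι : Type*} [Fintype α]

def weightedGram (μ : α → ℝ) (v : ι → α → ℝ) : Matrix ι ι ℝ :=
  Matrix.of fun i j => ∑ x, μ x * (v i x * v j x)

theorem weightedGram_comm (μ : α → ℝ) (v : ι → α → ℝ) (i j : ι) :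
    weightedGram μ v i j = weightedGram μ v j i := by
  simp only [weightedGram, of_apply, mul_comm (v i _)]

variable [Fintype ι]

theorem vecMul_weightedGram (μ : α → ℝ) (v : ι → α → ℝ) (c : ι → ℝ) (j : ι) :
    vecMul c (weightedGram μ v) j = ∑ x, μ x * (∑ i, c i * v i x) * v j x := by
  simp only [vecMul, dotProduct, weightedGram, of_apply, mul_sum, sum_mul]
  rw [sum_comm]
  exact sum_congr rfl fun _ _ => sum_congr rfl fun _ _ => by ring

open Classical in
theorem card_le_card_support_of_weightedGram (μ : α → ℝ) (v : ι → α → ℝ)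
    (h : ∀ c, vecMul c (weightedGram μ v) = 0 → c = 0) :
    Fintype.card ι ≤ (univ.filter fun x => μ x ≠ 0).card := by
  set S : Finset α := univ.filter fun x => μ x ≠ 0
  have hli : LinearIndependent ℝ fun i (x : S) => v i x := by
    rw [Fintype.linearIndependent_iff]
    intro c hc
    refine congrFun (h c (funext fun j => ?_))
    rw [vecMul_weightedGram, Pi.zero_apply]
    refine sum_eq_zero fun x _ => ?_
    by_cases hx : μ x = 0
    · simp [hx]
    · have hx' : ∑ i, c i * v i x = 0 := by simpa using congrFun hc ⟨x, by simp [S, hx]⟩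
      rw [hx', mul_zero, zero_mul]
  simpa using hli.fintype_card_le_finrank

theorem sum_mul_sub_mul_sub (μ f g : α → ℝ) {m n : ℝ} (h1 : ∑ x, μ x = 1)
    (hf : ∑ x, μ x * f x = m) (hg : ∑ x, μ x * g x = n) :
    ∑ x, μ x * ((f x - m) * (g x - n)) = ∑ x, μ x * (f x * g x) - m * n := by
  have : ∀ x, μ x * ((f x - m) * (g x - n))
      = μ x * (f x * g x) - n * (μ x * f x) - m * (μ x * g x) + m * n * μ x := fun x => by ring
  simp only [this, sum_add_distrib, sum_sub_distrib, ← mul_sum, h1, hf, hg]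
  ring

theorem sum_mul_sub_eq_zero (μ f : α → ℝ) {m : ℝ} (h1 : ∑ x, μ x = 1)
    (hf : ∑ x, μ x * f x = m) : ∑ x, μ x * (f x - m) = 0 := by
  simp only [mul_sub, sum_sub_distrib, hf, ← sum_mul, h1, one_mul, sub_self]

end WeightedGram

theorem eq_zero_of_forall_mul_eq_sum {β : Type*} [Fintype β] {r : ℝ} (hr₀ : r ≠ 0)
    (hr : r ≠ Fintype.card β) {c : β → ℝ} (h : ∀ b, r * c b = ∑ b', c b') : c = 0 := by
  have hsum : ∑ b, c b = 0 := by
    have hr_sum : r * ∑ b, c b = Fintype.card β * ∑ b, c b := by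
      simp [mul_sum, h]
    have : (r - Fintype.card β) * ∑ b, c b = 0 := by rw [sub_mul, hr_sum, sub_self]
    exact (mul_eq_zero.1 this).resolve_left (sub_ne_zero.2 hr)
  funext b
  exact (mul_eq_zero.1 ((h b).trans hsum)).resolve_left hr₀

section BalancedPairwiseIndependent

variable {q k : ℕ}

structure IsBalancedPairwiseIndependent (μ : (Fin k → Fin q) → ℝ) : Prop where
  sum_eq_one : ∑ x, μ x = 1
  marginal : ∀ (i : Fin k) (a : Fin q),
    (∑ x : Fin k → Fin q, if x i = a then μ x else 0) = 1 / q
  pair_marginal : ∀ (i j : Fin k), i ≠ j → ∀ a b : Fin q,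
    (∑ x : Fin k → Fin q, if x i = a ∧ x j = b then μ x else 0) = 1 / q ^ 2

def coordIndicator (i : Fin k) (a : Fin q) (x : Fin k → Fin q) : ℝ :=
  if x i = a then 1 else 0

namespace IsBalancedPairwiseIndependent

variable {μ : (Fin k → Fin q) → ℝ}

theorem sum_mul_coordIndicator (hμ : IsBalancedPairwiseIndependent μ) (i : Fin k) (a : Fin q) :
    ∑ x, μ x * coordIndicator i a x = 1 / q := by
  simpa [coordIndicator] using hμ.marginal i a

theorem sum_mul_coordIndicator_mul (hμ : IsBalancedPairwiseIndependent μ) (i j : Fin k)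
    (a b : Fin q) :
    ∑ x, μ x * (coordIndicator i a x * coordIndicator j b x) =
      if i = j then (if a = b then (1 / q : ℝ) else 0) else 1 / q ^ 2 := by
  split_ifs with hij hab
  · subst hij hab
    refine (sum_congr rfl fun x _ => ?_).trans (hμ.marginal i a)
    by_cases h : x i = a <;> simp [coordIndicator, h]
  · subst hij
    refine sum_eq_zero fun x _ => ?_
    by_cases h : x i = a <;> simp [coordIndicator, h, hab]
  · refine (sum_congr rfl fun x _ => ?_).trans (hμ.pair_marginal i j hij a b)
    by_cases h : x i = a <;> by_cases h' : x j = b <;> simp [coordIndicator, h, h']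

end IsBalancedPairwiseIndependent

end BalancedPairwiseIndependent

section CenteredIndicators

variable {q k : ℕ} {μ : (Fin k → Fin q) → ℝ}

/-- One value `a₀` per coordinate is left out: the `q` centred indicators of a coordinate sum to
zero. -/
noncomputable def centeredIndicators (a₀ : Fin q) :
    Option (Fin k × {a : Fin q // a ≠ a₀}) → (Fin k → Fin q) → ℝ
  | none => fun _ => 1
  | some (i, a) => fun x => coordIndicator i a x - 1 / q

theorem weightedGram_centeredIndicators_none_none (hμ : IsBalancedPairwiseIndependent μ)
    (a₀ : Fin q) : weightedGram μ (centeredIndicators (k := k) a₀) none none = 1 := by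
  simp [weightedGram, centeredIndicators, hμ.sum_eq_one]

theorem weightedGram_centeredIndicators_none_some (hμ : IsBalancedPairwiseIndependent μ)
    (a₀ : Fin q) (p : Fin k × {a : Fin q // a ≠ a₀}) :
    weightedGram μ (centeredIndicators a₀) none (some p) = 0 := by
  simpa [weightedGram, centeredIndicators] using
    sum_mul_sub_eq_zero μ _ hμ.sum_eq_one (hμ.sum_mul_coordIndicator p.1 p.2)

theorem weightedGram_centeredIndicators_some_some (hμ : IsBalancedPairwiseIndependent μ)
    (a₀ : Fin q) (i j : Fin k) (a b : {a : Fin q // a ≠ a₀}) :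
    weightedGram μ (centeredIndicators a₀) (some (i, a)) (some (j, b)) =
      if i = j then (if a = b then (1 / q : ℝ) else 0) - 1 / q ^ 2 else 0 := by
  simp only [weightedGram, centeredIndicators, of_apply]
  rw [sum_mul_sub_mul_sub μ _ _ hμ.sum_eq_one (hμ.sum_mul_coordIndicator i a)
    (hμ.sum_mul_coordIndicator j b), hμ.sum_mul_coordIndicator_mul]
  simp only [Subtype.ext_iff]
  split_ifs <;> ring

variable {a₀ : Fin q}

theorem vecMul_weightedGram_centeredIndicators_none (hμ : IsBalancedPairwiseIndependent μ)
    (c : Option (Fin k × {a : Fin q // a ≠ a₀}) → ℝ) :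
    vecMul c (weightedGram μ (centeredIndicators a₀)) none = c none := by
  simp [vecMul, dotProduct, Fintype.sum_option, weightedGram_centeredIndicators_none_none hμ,
    weightedGram_comm _ _ (some _) none, weightedGram_centeredIndicators_none_some hμ]

theorem vecMul_weightedGram_centeredIndicators_some (hμ : IsBalancedPairwiseIndependent μ)
    (c : Option (Fin k × {a : Fin q // a ≠ a₀}) → ℝ) (j : Fin k) (b : {a : Fin q // a ≠ a₀}) :
    vecMul c (weightedGram μ (centeredIndicators a₀)) (some (j, b)) =
      c (some (j, b)) / q - (∑ a, c (some (j, a))) / q ^ 2 := by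
  simp only [vecMul, dotProduct, Fintype.sum_option, Fintype.sum_prod_type,
    weightedGram_centeredIndicators_none_some hμ, weightedGram_centeredIndicators_some_some hμ]
  rw [Fintype.sum_eq_single j fun i hij => by simp [hij]]
  simp [mul_sub, sum_sub_distrib, ← sum_mul, div_eq_mul_inv]

theorem eq_zero_of_vecMul_weightedGram_centeredIndicators (hμ : IsBalancedPairwiseIndependent μ)
    {c : Option (Fin k × {a : Fin q // a ≠ a₀}) → ℝ}
    (hc : vecMul c (weightedGram μ (centeredIndicators a₀)) = 0) : c = 0 := by
  have hq : (q : ℝ) ≠ 0 := by exact_mod_cast a₀.pos.ne'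
  ext (_ | ⟨j, b⟩)
  · simpa [vecMul_weightedGram_centeredIndicators_none hμ] using congrFun hc none
  · have hrow (b : {a : Fin q // a ≠ a₀}) : (q : ℝ) * c (some (j, b)) = ∑ a, c (some (j, a)) := by
      have := congrFun hc (some (j, b))
      rw [vecMul_weightedGram_centeredIndicators_some hμ, Pi.zero_apply] at this
      field_simp at this
      linear_combination this
    have hcard : (q : ℝ) ≠ Fintype.card {a : Fin q // a ≠ a₀} := by
      have := a₀.pos
      simp [Fintype.card_subtype_compl]
      omega
    exact congrFun (eq_zero_of_forall_mul_eq_sum hq hcard hrow) b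

end CenteredIndicators

open Classical in
theorem stmt_17_general (q k : ℕ) (hq : 1 ≤ q) (μ : (Fin k → Fin q) → ℝ)
    (hμ1 : ∑ x, μ x = 1)
    (hbal : ∀ (i : Fin k) (a : Fin q),
      (∑ x : Fin k → Fin q, if x i = a then μ x else 0) = 1 / q)
    (hpair : ∀ (i j : Fin k), i ≠ j → ∀ a b : Fin q,
      (∑ x : Fin k → Fin q, if x i = a ∧ x j = b then μ x else 0) = 1 / q ^ 2) :
    k * (q - 1) + 1 ≤ (Finset.univ.filter (fun x : Fin k → Fin q => μ x ≠ 0)).card := by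
  have hμ : IsBalancedPairwiseIndependent μ := ⟨hμ1, hbal, hpair⟩
  have := card_le_card_support_of_weightedGram μ (centeredIndicators (⟨0, hq⟩ : Fin q))
    fun _ => eq_zero_of_vecMul_weightedGram_centeredIndicators hμ
  simpa [Fintype.card_subtype_compl] using this

open Classical in
/-- Any balanced pairwise independent probability distribution on
`[q]^k` has support of size at least `k(q−1) + 1`. -/
theorem stmt_17 (q k : ℕ) (hq : 1 ≤ q) (μ : (Fin k → Fin q) → ℝ)
    (hμ0 : ∀ x, 0 ≤ μ x) (hμ1 : ∑ x, μ x = 1)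
    (hbal : ∀ (i : Fin k) (a : Fin q),
      (∑ x : Fin k → Fin q, if x i = a then μ x else 0) = 1 / q)
    (hpair : ∀ (i j : Fin k), i ≠ j → ∀ a b : Fin q,
      (∑ x : Fin k → Fin q, if x i = a ∧ x j = b then μ x else 0) = 1 / q ^ 2) :
    k * (q - 1) + 1 ≤ (Finset.univ.filter (fun x : Fin k → Fin q => μ x ≠ 0)).card :=
  stmt_17_general q k hq μ hμ1 hbal hpair
end

section
/- Let (Ω, μ) be a probability space on a finite product Ω = Ω_1 × ⋯ × Ω_k, and define ρ(Ω_1,…,Ω_k; μ) = max_{1 ≤ i ≤ k−1} ρ(Ω_{{1,…,i}}, Ω_{{i+1,…,k}}; μ), where ρ(A, B; μ) is the supremum of Cov[f(a)g(b)] over functions f : A → ℝ, g : B → ℝ with Var[f] = Var[g] = 1. If μ(w) > 0 for all w ∈ Ω, then ρ(Ω_1,…,Ω_k; μ) < 1. -/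
/-!
Write `D = F - G` for `F = f(w_{≤ i})` and `G = g(w_{> i})`. Polarization gives
`Cov[F, G] = (Var F + Var G - Var D) / 2 = 1 - Var D / 2`, so it suffices to bound `Var D` from
below by the smallest atom `α` of `μ`. By the Bhatia–Davis inequality a unit-variance `F` has
oscillation at least `2`, say `F w₁ - F w₂ ≥ 2`. Since `F` and `G` read disjoint coordinates,
some `w₃` has the `F`-value of `w₂` and the `G`-value of `w₁`, so `D w₁ - D w₃ = F w₁ - F w₂ ≥ 2`
and `D` is at distance at least `1` from its mean at `w₁` or at `w₃`; that atom alone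
contributes at least `α` to `Var D`.
-/

open Finset

theorem one_le_sq_sub_or_one_le_sq_sub {a b : ℝ} (h : 2 ≤ a - b) (c : ℝ) :
    1 ≤ (a - c) ^ 2 ∨ 1 ≤ (b - c) ^ 2 := by
  rcases le_total c ((a + b) / 2) with hc | hc
  · left; nlinarith
  · right; nlinarith

namespace Weighted

variable {Ω : Type*} [Fintype Ω] (μ : Ω → ℝ)

def mean (F : Ω → ℝ) : ℝ := ∑ w, μ w * F w

def variance (F : Ω → ℝ) : ℝ := ∑ w, μ w * (F w - mean μ F) ^ 2

def covariance (F G : Ω → ℝ) : ℝ := ∑ w, μ w * F w * G w - mean μ F * mean μ G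

variable {μ}

theorem mean_sub (F G : Ω → ℝ) : mean μ (F - G) = mean μ F - mean μ G := by
  simp only [mean, Pi.sub_apply, mul_sub, sum_sub_distrib]

theorem variance_eq_sum_sq_sub (hsum : ∑ w, μ w = 1) (F : Ω → ℝ) :
    variance μ F = ∑ w, μ w * F w ^ 2 - mean μ F ^ 2 := by
  have expand : ∀ w, μ w * (F w - mean μ F) ^ 2
      = μ w * F w ^ 2 - 2 * mean μ F * (μ w * F w) + mean μ F ^ 2 * μ w := fun w => by ring
  rw [variance, sum_congr rfl fun w _ => expand w]
  simp only [sum_add_distrib, sum_sub_distrib, ← mul_sum, hsum, mean]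
  ring

theorem variance_sub (hsum : ∑ w, μ w = 1) (F G : Ω → ℝ) :
    variance μ (F - G) = variance μ F + variance μ G - 2 * covariance μ F G := by
  have expand : ∀ w, μ w * (F - G) w ^ 2
      = μ w * F w ^ 2 + μ w * G w ^ 2 - 2 * (μ w * F w * G w) := fun w => by
    simp only [Pi.sub_apply]; ring
  simp only [variance_eq_sum_sq_sub hsum, covariance, mean_sub, expand, sum_add_distrib,
    sum_sub_distrib, ← mul_sum]
  ring

/-- The Bhatia–Davis inequality. -/
theorem variance_le_mul_of_mem_Icc (hμ : ∀ w, 0 ≤ μ w) (hsum : ∑ w, μ w = 1) {F : Ω → ℝ}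
    {m M : ℝ} (hF : ∀ w, F w ∈ Set.Icc m M) :
    variance μ F ≤ (M - mean μ F) * (mean μ F - m) := by
  have hnonneg : 0 ≤ ∑ w, μ w * ((M - F w) * (F w - m)) :=
    sum_nonneg fun w _ => mul_nonneg (hμ w) (mul_nonneg (sub_nonneg.2 (hF w).2)
      (sub_nonneg.2 (hF w).1))
  have expand : ∀ w, μ w * ((M - F w) * (F w - m))
      = (M + m) * (μ w * F w) - μ w * F w ^ 2 - M * m * μ w := fun w => by ring
  simp only [expand, sum_sub_distrib, ← mul_sum, hsum] at hnonneg
  rw [variance_eq_sum_sq_sub hsum]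
  simp only [mean] at *
  linarith

theorem exists_two_le_sub_of_variance_eq_one (hμ : ∀ w, 0 ≤ μ w) (hsum : ∑ w, μ w = 1)
    {F : Ω → ℝ} (hF : variance μ F = 1) : ∃ w₁ w₂, 2 ≤ F w₁ - F w₂ := by
  have hne : (univ : Finset Ω).Nonempty :=
    nonempty_of_sum_ne_zero (by rw [hsum]; exact one_ne_zero)
  obtain ⟨w₁, -, hmax⟩ := exists_max_image univ F hne
  obtain ⟨w₂, -, hmin⟩ := exists_min_image univ F hne
  have hBD := variance_le_mul_of_mem_Icc hμ hsum
    (F := F) (fun w => ⟨hmin w (mem_univ w), hmax w (mem_univ w)⟩)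
  have hosc : 0 ≤ F w₁ - F w₂ := sub_nonneg.2 (hmax w₂ (mem_univ w₂))
  refine ⟨w₁, w₂, ?_⟩
  nlinarith [sq_nonneg (F w₁ + F w₂ - 2 * mean μ F)]

theorem mul_sq_le_variance (hμ : ∀ w, 0 ≤ μ w) (F : Ω → ℝ) (w : Ω) :
    μ w * (F w - mean μ F) ^ 2 ≤ variance μ F :=
  single_le_sum (f := fun w => μ w * (F w - mean μ F) ^ 2)
    (fun w _ => mul_nonneg (hμ w) (sq_nonneg _)) (mem_univ w)

theorem covariance_le_one_sub_of_mixing {α : ℝ}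
    (hα₀ : 0 ≤ α) (hα : ∀ w, α ≤ μ w) (hsum : ∑ w, μ w = 1) {F G : Ω → ℝ}
    (hmix : ∀ w₁ w₂, ∃ w₃, F w₃ = F w₂ ∧ G w₃ = G w₁)
    (hF : variance μ F = 1) (hG : variance μ G = 1) :
    covariance μ F G ≤ 1 - α / 2 := by
  have hμ : ∀ w, 0 ≤ μ w := fun w => hα₀.trans (hα w)
  obtain ⟨w₁, w₂, hgap⟩ := exists_two_le_sub_of_variance_eq_one hμ hsum hF
  obtain ⟨w₃, hFw₃, hGw₃⟩ := hmix w₁ w₂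
  have hDgap : 2 ≤ (F - G) w₁ - (F - G) w₃ := by
    simp only [Pi.sub_apply, hFw₃, hGw₃]; linarith
  obtain ⟨w, hw⟩ : ∃ w, 1 ≤ ((F - G) w - mean μ (F - G)) ^ 2 := by
    rcases one_le_sq_sub_or_one_le_sq_sub hDgap (mean μ (F - G)) with h | h
    exacts [⟨w₁, h⟩, ⟨w₃, h⟩]
  have hvar : α ≤ variance μ (F - G) :=
    calc α ≤ μ w * ((F - G) w - mean μ (F - G)) ^ 2 := by nlinarith [hα w]
      _ ≤ variance μ (F - G) := mul_sq_le_variance hμ _ w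
  linarith [variance_sub hsum F G]

end Weighted

theorem exists_restrict_eq_and_restrict_eq {ι : Type*} {Ω : ι → Type*} {p q : ι → Prop}
    (hpq : ∀ j, p j → ¬ q j) (w₁ w₂ : ∀ j, Ω j) :
    ∃ w : ∀ j, Ω j, (fun j : Subtype p => w j) = (fun j : Subtype p => w₁ j) ∧
      (fun j : Subtype q => w j) = (fun j : Subtype q => w₂ j) := by
  classical
  refine ⟨fun j => if p j then w₁ j else w₂ j, ?_, ?_⟩
  · exact funext fun j => if_pos j.2
  · exact funext fun j => if_neg fun hp => hpq j hp j.2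

theorem stmt_18_general {k : ℕ} (Ω : Fin k → Type*)
    [∀ i, Fintype (Ω i)]
    (μ : (∀ i, Ω i) → ℝ)
    (hpos : ∀ w, 0 < μ w) (hsum : ∑ w, μ w = 1) :
    ∃ ρ₀ : ℝ, ρ₀ < 1 ∧
      ∀ (i : ℕ), i + 1 < k →
      ∀ (f : (∀ j : {j : Fin k // j.val ≤ i}, Ω j) → ℝ)
        (g : (∀ j : {j : Fin k // i < j.val}, Ω j) → ℝ),
        -- Var[f] = 1
        (∑ w : ∀ i, Ω i, μ w *
            (f (fun j => w j) - ∑ w' : ∀ i, Ω i, μ w' * f (fun j => w' j)) ^ 2) = 1 →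
        -- Var[g] = 1
        (∑ w : ∀ i, Ω i, μ w *
            (g (fun j => w j) - ∑ w' : ∀ i, Ω i, μ w' * g (fun j => w' j)) ^ 2) = 1 →
        -- Cov[f·g] ≤ ρ₀
        (∑ w : ∀ i, Ω i, μ w * f (fun j => w j) * g (fun j => w j))
          - (∑ w : ∀ i, Ω i, μ w * f (fun j => w j))
            * (∑ w : ∀ i, Ω i, μ w * g (fun j => w j)) ≤ ρ₀ := by
  obtain ⟨w₀, -, hw₀⟩ := exists_min_image univ μ
    (nonempty_of_sum_ne_zero (by rw [hsum]; exact one_ne_zero))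
  refine ⟨1 - μ w₀ / 2, by linarith [hpos w₀], fun i _ f g hf hg => ?_⟩
  refine Weighted.covariance_le_one_sub_of_mixing (hpos w₀).le (fun w => hw₀ w (mem_univ w))
    hsum (fun w₁ w₂ => ?_) hf hg
  obtain ⟨w₃, hw₃f, hw₃g⟩ := exists_restrict_eq_and_restrict_eq
    (fun (j : Fin k) (hj : j.val ≤ i) => hj.not_gt) w₂ w₁
  exact ⟨w₃, congrArg f hw₃f, congrArg g hw₃g⟩

/-- Let `μ` be a probability measure of full support on a finite
product `Ω 1 × ⋯ × Ω k`.  Then `ρ(Ω_1,…,Ω_k; μ) < 1`: there is `ρ₀ < 1`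
bounding, for every split `{1,…,i} / {i+1,…,k}`, the covariance
`Cov[f·g]` over all functions `f` of the first block and `g` of the second
block having variance `1`. -/
theorem stmt_18 {k : ℕ} (hk : 2 ≤ k) (Ω : Fin k → Type*)
    [∀ i, Fintype (Ω i)] [∀ i, Nonempty (Ω i)]
    (μ : (∀ i, Ω i) → ℝ)
    (hpos : ∀ w, 0 < μ w) (hsum : ∑ w, μ w = 1) :
    ∃ ρ₀ : ℝ, ρ₀ < 1 ∧
      ∀ (i : ℕ), i + 1 < k →
      ∀ (f : (∀ j : {j : Fin k // j.val ≤ i}, Ω j) → ℝ)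
        (g : (∀ j : {j : Fin k // i < j.val}, Ω j) → ℝ),
        -- Var[f] = 1
        (∑ w : ∀ i, Ω i, μ w *
            (f (fun j => w j) - ∑ w' : ∀ i, Ω i, μ w' * f (fun j => w' j)) ^ 2) = 1 →
        -- Var[g] = 1
        (∑ w : ∀ i, Ω i, μ w *
            (g (fun j => w j) - ∑ w' : ∀ i, Ω i, μ w' * g (fun j => w' j)) ^ 2) = 1 →
        -- Cov[f·g] ≤ ρ₀
        (∑ w : ∀ i, Ω i, μ w * f (fun j => w j) * g (fun j => w j))
          - (∑ w : ∀ i, Ω i, μ w * f (fun j => w j))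
            * (∑ w : ∀ i, Ω i, μ w * g (fun j => w j)) ≤ ρ₀ :=
  stmt_18_general Ω μ hpos hsum
end
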